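/- arXiv:2109.03317 — 2 statements merged into one kernel-verified Lean document; each statement's English description precedes it below -/
import Mathlib

section
/- The Radau IIA multivalue block method y₂^{n+1} = y₃^n + (5/6) r f(y₂^{n+1}) − (1/6) r f(y₃^{n+1}), y₃^{n+1} = y₃^n + (3/2) r f(y₂^{n+1}) + (1/2) r f(y₃^{n+1}), applied to y' = λy with z = rλ satisfying appropriate invertibility, gives y₃^{n+1} = R(2z) y₃^n where R(w) = (1 + w/3)/(1 − 2w/3 + w²/6) is the stability function of the 2-stage Radau IIA method with stepsize h = 2r. -/
/-- The Radau IIA multivalue block method applied to `y' = λ y` with `z = rλ`: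
if `y₂' = y₃ + (5/6) z y₂' − (1/6) z y₃'` and `y₃' = y₃ + (3/2) z y₂' + (1/2) z y₃'`,
then `y₃' = R(2z) y₃` where `R(w) = (1 + w/3)/(1 − 2w/3 + w²/6)` is the stability
function of the 2-stage Radau IIA method with stepsize `h = 2r`. -/
theorem radauIIA_block_stability (z y₃ a b : ℂ)
    (hden : 1 - 2 * (2 * z) / 3 + (2 * z) ^ 2 / 6 ≠ 0)
    (ha : a = y₃ + (5/6) * z * a - (1/6) * z * b)
    (hb : b = y₃ + (3/2) * z * a + (1/2) * z * b) :
    b = ((1 + (2 * z) / 3) / (1 - 2 * (2 * z) / 3 + (2 * z) ^ 2 / 6)) * y₃ := by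
  rw [div_mul_eq_mul_div, eq_div_iff hden]
  linear_combination (3*z/2) * ha + (1 - 5*z/6) * hb
end

section
/- With the q = 3 FIMEX-Radau matrices A, B¹, B² as above and z₂ = 0, the stability matrix M(z₁, 0) = (I − z₁B¹)⁻¹A has spectral radius |R(2z₁)| where R(w) = (1 + w/3)/(1 − 2w/3 + w²/6): the eigenvalues of M(z₁,0) are 0, 0, and R(2z₁). -/
set_option maxHeartbeats 1000000


/-- With `z₂ = 0`, the q = 3 FIMEX-Radau stability matrix
`M(z₁,0) = (I − z₁B¹)⁻¹ A` has eigenvalues `0, 0, R(2z₁)` where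
`R(w) = (1 + w/3)/(1 − 2w/3 + w²/6)` is the Radau IIA stability function:
its characteristic polynomial is `X² (X − R(2z₁))`. -/
theorem fimex_radau_q3_eigenvalues (z₁ : ℂ)
    (A B₁ : Matrix (Fin 3) (Fin 3) ℂ)
    (hA : A = Matrix.of ![![0, 0, 1], ![0, 0, 1], ![0, 0, 1]])
    (hB₁ : B₁ = Matrix.of ![![0, 0, 0], ![0, 5/6, -1/6], ![0, 3/2, 1/2]])
    (hinv : IsUnit (1 - z₁ • B₁))
    (hden : 1 - 2 * (2 * z₁) / 3 + (2 * z₁) ^ 2 / 6 ≠ 0) :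
    ((1 - z₁ • B₁)⁻¹ * A).charpoly =
      Polynomial.X ^ 2 * (Polynomial.X -
        Polynomial.C ((1 + (2 * z₁) / 3) /
          (1 - 2 * (2 * z₁) / 3 + (2 * z₁) ^ 2 / 6))) := by
  set d : ℂ := 1 - 2 * (2 * z₁) / 3 + (2 * z₁) ^ 2 / 6 with hd
  set M : Matrix (Fin 3) (Fin 3) ℂ :=
    Matrix.of ![![0, 0, 1], ![0, 0, (1 - 2 * z₁ / 3) / d],
      ![0, 0, (1 + 2 * z₁ / 3) / d]] with hM
  have hNM : (1 - z₁ • B₁) * M = A := by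
    subst hA hB₁
    have hd0 : d ≠ 0 := hden
    ext i j
    fin_cases i <;> fin_cases j <;>
      simp [Matrix.mul_apply, Fin.sum_univ_three, hM, Matrix.one_apply,
        Matrix.vecHead, Matrix.vecTail] <;>
      first
        | rfl
        | (field_simp [hd0]; try ring)
  have hM' : (1 - z₁ • B₁)⁻¹ * A = M := by
    rw [← hNM, ← Matrix.mul_assoc,
      Matrix.nonsing_inv_mul _ ((Matrix.isUnit_iff_isUnit_det _).mp hinv),
      Matrix.one_mul]
  rw [hM', Matrix.charpoly, Matrix.det_fin_three]
  simp [Matrix.charmatrix_apply, hM, Matrix.one_apply, Matrix.vecHead, Matrix.vecTail]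
  exact Or.inl (sq Polynomial.X).symm
end
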